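/- arXiv:2510.00951 — 2 statements merged into one kernel-verified Lean document; each statement's English description precedes it below -/
import Mathlib

section
/- Let P be a finite, graded, bounded poset of rank n ≥ 1. Then Ψ_P(a,b) = a(a-b)^{n-1} + ∑_{0̂ < w < 1̂} a(a-b)^{rk(w)-1}·b·Ψ̃_{[w,1̂]}(a,b). -/
open Polynomial

noncomputable section

/-- The coefficient ring `ℤ[y]`. -/
abbrev NCR : Type := Polynomial ℤ

/-- The ring `ℤ[y]⟨a,b⟩` of noncommutative polynomials in the letters `a` (encoded `false`)
and `b` (encoded `true`) with coefficients in `ℤ[y]`. -/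
abbrev NCPoly : Type := MonoidAlgebra NCR (FreeMonoid Bool)

/-- The variable `a`. -/
def Aa : NCPoly := MonoidAlgebra.of NCR (FreeMonoid Bool) (FreeMonoid.of false)

/-- The variable `b`. -/
def Bb : NCPoly := MonoidAlgebra.of NCR (FreeMonoid Bool) (FreeMonoid.of true)

/-- The `ω`-transformation on a single `ab`-monomial (word in `a`,`b`): every occurrence of
the factor `ab` is replaced by `(1+y)ab + (y+y²)ba`, and then all remaining occurrences of `a`
are replaced by `a+yb` and of `b` by `b+ya`. -/
def omegaWord : List Bool → NCPoly
  | [] => 1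
  | false :: true :: rest =>
      (((1 + X : NCR)) • (Aa * Bb) + ((X + X ^ 2 : NCR)) • (Bb * Aa)) * omegaWord rest
  | false :: rest => (Aa + (X : NCR) • Bb) * omegaWord rest
  | true :: rest => (Bb + (X : NCR) • Aa) * omegaWord rest

/-- The `ω`-transformation on `ℤ[y]⟨a,b⟩`, extended linearly from `ab`-monomials. -/
def omega (f : NCPoly) : NCPoly :=
  (f.coeff : FreeMonoid Bool →₀ NCR).sum fun w c => c • omegaWord (FreeMonoid.toList w)

/-- The `ι`-transformation on `ℤ[y]⟨a,b⟩`: it removes the initial letter from every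
`ab`-monomial (and kills the empty monomial). -/
def iota (f : NCPoly) : NCPoly :=
  (f.coeff : FreeMonoid Bool →₀ NCR).sum fun w c =>
    match FreeMonoid.toList w with
    | [] => 0
    | _ :: rest => c • MonoidAlgebra.of NCR (FreeMonoid Bool) (FreeMonoid.ofList rest)

/-- `wt_S(a,b) = w_0 ⋯ w_{n-1}` where `w_k = b` if `k ∈ S` and `w_k = a - b` otherwise. -/
def wtS (n : ℕ) (S : Finset ℕ) : NCPoly :=
  ((List.range n).map fun j => if j ∈ S then Bb else Aa - Bb).prod

/-- Evaluation `f(y,a,b) ↦ f(-x,1,x)` used to define (augmented) Chow polynomials. -/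
def evalChow (f : NCPoly) : Polynomial ℤ :=
  (f.coeff : FreeMonoid Bool →₀ NCR).sum fun w c =>
    c.comp (-X) * X ^ ((FreeMonoid.toList w).count true)

/-- The `ab`-monomial `m_T = m_0 ⋯ m_{n-1}` with `m_i = b` if `i ∈ T` and `m_i = a` else. -/
def mT (n : ℕ) (T : Finset ℕ) : FreeMonoid Bool :=
  FreeMonoid.ofList ((List.range n).map fun i => decide (i ∈ T))

variable {P : Type*} [Fintype P] [PartialOrder P]

open Classical in
/-- The Möbius function of a finite poset:
`μ(w,w) = 1` and `μ(u,w) = -∑_{u ≤ v < w} μ(u,v)` for `u ≠ w`. -/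
def mobius (u : P) : P → ℤ
  | w =>
    if u = w then 1
    else - ∑ v ∈ (Finset.univ.filter fun v : P => u ≤ v ∧ v < w).attach, mobius u v.1
  termination_by w => (Finset.univ.filter fun v : P => u ≤ v ∧ v ≤ w).card
  decreasing_by
    have hv := v.2
    simp only [Finset.mem_filter, Finset.mem_univ, true_and] at hv
    apply Finset.card_lt_card
    constructor
    · intro x hx
      simp only [Finset.mem_filter, Finset.mem_univ, true_and] at hx ⊢
      exact ⟨hx.1, hx.2.trans hv.2.le⟩
    · intro hsub
      have hw : w ∈ Finset.univ.filter fun v : P => u ≤ v ∧ v ≤ w := by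
        simp only [Finset.mem_filter, Finset.mem_univ, true_and]
        exact ⟨hv.1.trans hv.2.le, le_refl w⟩
      have := hsub hw
      simp only [Finset.mem_filter, Finset.mem_univ, true_and] at this
      exact absurd (lt_of_le_of_lt this.2 hv.2) (lt_irrefl w)

open Classical in
/-- The Poincaré polynomial of the interval `[u,w]`, with respect to the rank function `rk`:
`Poin_{[u,w]}(y) = ∑_{u ≤ v ≤ w} μ(u,v)·(-y)^{rk(v) - rk(u)}`. -/
def poin (rk : P → ℕ) (u w : P) : Polynomial ℤ :=
  ∑ v ∈ Finset.univ.filter fun v : P => u ≤ v ∧ v ≤ w,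
    mobius u v • (-X : Polynomial ℤ) ^ (rk v - rk u)

variable [BoundedOrder P]

open Classical in
/-- The extended `ab`-index of the interval `[u₀, ⊤]` of `P` (with ranks taken relative
to `u₀`): the sum over all chains `u₀ ≤ C_1 < ⋯ < C_k < C_{k+1} = ⊤` of
`Poin_{P,C}(y)·wt_C(a,b)`. -/
def exPsiFrom (rk : P → ℕ) (u₀ : P) : NCPoly :=
  ∑ k ∈ Finset.range (Fintype.card P),
    ∑ c ∈ Finset.univ.filter fun c : Fin (k + 1) → P =>
        StrictMono c ∧ c (Fin.last k) = (⊤ : P) ∧ u₀ ≤ c 0,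
      (∏ i : Fin k, poin rk (c i.castSucc) (c i.succ)) •
        wtS (rk (⊤ : P) - rk u₀) (Finset.univ.image fun i : Fin k => rk (c i.castSucc) - rk u₀)

open Classical in
/-- The `ab`-index of the interval `[u₀, ⊤]` of `P`: the sum over all chains
`u₀ ≤ C_1 < ⋯ < C_k < C_{k+1} = ⊤` of `wt_C(a,b)`. -/
def psiFrom (rk : P → ℕ) (u₀ : P) : NCPoly :=
  ∑ k ∈ Finset.range (Fintype.card P),
    ∑ c ∈ Finset.univ.filter fun c : Fin (k + 1) → P =>
        StrictMono c ∧ c (Fin.last k) = (⊤ : P) ∧ u₀ ≤ c 0,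
      wtS (rk (⊤ : P) - rk u₀) (Finset.univ.image fun i : Fin k => rk (c i.castSucc) - rk u₀)

/-- `exΨ̃ = ι(exΨ)` for the interval `[u₀, ⊤]`. -/
def exPsiTildeFrom (rk : P → ℕ) (u₀ : P) : NCPoly := iota (exPsiFrom rk u₀)

/-- `Ψ̃ = ι(Ψ)` for the interval `[u₀, ⊤]`. -/
def psiTildeFrom (rk : P → ℕ) (u₀ : P) : NCPoly := iota (psiFrom rk u₀)

open Classical in
/-- The flag `f`-vector `α(S)`: the number of maximal chains of the rank-selected subposet,
i.e. of chains `C_1 < ⋯ < C_k < C_{k+1} = ⊤` with `{rk(C_1), …, rk(C_k)} = S`. -/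
def flagAlpha (rk : P → ℕ) (S : Finset ℕ) : ℕ :=
  ∑ k ∈ Finset.range (Fintype.card P),
    (Finset.univ.filter fun c : Fin (k + 1) → P =>
      StrictMono c ∧ c (Fin.last k) = (⊤ : P) ∧
        (Finset.univ.image fun i : Fin k => rk (c i.castSucc)) = S).card

/-- The flag `h`-vector `β(T) = ∑_{S ⊆ T} (-1)^{|T∖S|} α(S)`. -/
def flagBeta (rk : P → ℕ) (T : Finset ℕ) : ℤ :=
  ∑ S ∈ T.powerset, (-1 : ℤ) ^ (T \ S).card * (flagAlpha rk S : ℤ)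

/-- An `R`-labeling of the graded poset `P`: every nontrivial interval `[u,w]` has a unique
maximal (i.e. saturated) chain with weakly increasing labels. -/
def IsRLabeling (rk : P → ℕ) (lab : P → P → ℤ) : Prop :=
  ∀ u w : P, u < w →
    ∃! c : Fin (rk w - rk u + 1) → P,
      c 0 = u ∧ c (Fin.last (rk w - rk u)) = w ∧
        (∀ i : Fin (rk w - rk u), c i.castSucc ⋖ c i.succ) ∧
        ∀ i j : Fin (rk w - rk u), i ≤ j →
          lab (c i.castSucc) (c i.succ) ≤ lab (c j.castSucc) (c j.succ)

/-- The label sequence `(λ_0, …, λ_n)` of a maximal chain `c` with sign-set `E`: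
`λ_0 = 0` and `λ_i = ±λ(c_{i-1}, c_i)`, negative exactly when `i ∈ E`. -/
def lamSeq {n : ℕ} (lab : P → P → ℤ) (c : Fin (n + 1) → P) (E : Finset ℕ) :
    Fin (n + 1) → ℤ :=
  fun j =>
    if j = 0 then 0
    else (if (j : ℕ) ∈ E then -1 else 1) * lab (c ⟨j.1 - 1, by omega⟩) (c j)

/-- The `ab`-monomial `m(M,E) = m_0 ⋯ m_{n-1}` with `m_i = b` if `λ_i > λ_{i+1}`
and `m_i = a` if `λ_i ≤ λ_{i+1}`. -/
def rlabWord {n : ℕ} (lab : P → P → ℤ) (c : Fin (n + 1) → P) (E : Finset ℕ) :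
    FreeMonoid Bool :=
  FreeMonoid.ofList
    (List.ofFn fun i : Fin n => decide (lamSeq lab c E i.succ < lamSeq lab c E i.castSucc))

end

/-!
Group the chains of `[u, ⊤]` by their least element `v`: if `S v` is the weight sum of the
chains starting at `v` (ranks counted from `v`), then `Ψ_{[u,⊤]} = ∑_{v ≥ u} (a-b)^{rk v - rk u} S v`.
Removing the least element of a chain shows `S v = b X v` for `v < ⊤`, where
`X v = ∑_{v' > v} (a-b)^{rk v' - rk v - 1} S v'`. Hence `Ψ_{[u,⊤]} = S u + (a-b) X u = a X u`,
so `Ψ̃_{[u,⊤]} = X u`; expanding `X ⊥` by splitting off `v' = ⊤` gives the recursion.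
-/

noncomputable section

open Finset Classical

lemma iota_add (f g : NCPoly) : iota (f + g) = iota f + iota g := by
  unfold iota
  rw [MonoidAlgebra.coeff_add, Finsupp.sum_add_index]
  · intro w _
    cases FreeMonoid.toList w <;> simp
  · intro w _ c d
    cases FreeMonoid.toList w <;> simp [add_smul]

lemma iota_Aa_mul (f : NCPoly) : iota (Aa * f) = f := by
  induction f using MonoidAlgebra.induction with
  | zero => simp [iota]
  | single_add w c f _ _ ih =>
    rw [mul_add, iota_add, ih, Aa, MonoidAlgebra.of_apply, MonoidAlgebra.single_mul_single,
      one_mul]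
    simp [iota, MonoidAlgebra.coeff_single, FreeMonoid.toList_mul]

def wtIco (S : Finset ℕ) (t n : ℕ) : NCPoly :=
  ((List.range' t (n - t)).map fun j => if j ∈ S then Bb else Aa - Bb).prod

section Weights

variable {S : Finset ℕ} {t r n : ℕ}

lemma wtS_image_sub (hS : ∀ s ∈ S, t ≤ s) :
    wtS (n - t) (S.image (· - t)) = wtIco S t n := by
  rw [wtS, wtIco, List.range'_eq_map_range, List.map_map]
  congr 2
  funext j
  have hmem : j ∈ S.image (· - t) ↔ t + j ∈ S :=
    ⟨fun h => by obtain ⟨s, hs, rfl⟩ := Finset.mem_image.1 h; rwa [Nat.add_sub_cancel' (hS s hs)],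
      fun h => Finset.mem_image.2 ⟨t + j, h, Nat.add_sub_cancel_left ..⟩⟩
  simp [hmem]

lemma wtIco_trans (htr : t ≤ r) (hrn : r ≤ n) : wtIco S t n = wtIco S t r * wtIco S r n := by
  obtain ⟨p, rfl⟩ := Nat.exists_eq_add_of_le htr
  obtain ⟨q, rfl⟩ := Nat.exists_eq_add_of_le hrn
  simp only [wtIco, ← List.prod_append, ← List.map_append, List.range'_append_1,
    Nat.add_sub_cancel_left, Nat.add_assoc]
  rw [← Nat.add_assoc, Nat.add_sub_cancel_left]

lemma wtIco_self : wtIco S n n = 1 := by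
  simp [wtIco]

lemma wtIco_eq_pow (h : ∀ j ∈ S, j < t ∨ r ≤ j) : wtIco S t r = (Aa - Bb) ^ (r - t) := by
  rw [wtIco, List.prod_eq_pow_card _ (Aa - Bb), List.length_map, List.length_range']
  simp only [List.mem_map, List.mem_range']
  rintro _ ⟨j, ⟨i, hi, rfl⟩, rfl⟩
  rw [if_neg fun hj => by rcases h _ hj with h | h <;> omega]

lemma wtIco_of_mem (h : t ∈ S) (htn : t < n) : wtIco S t n = Bb * wtIco S (t + 1) n := by
  rw [wtIco, wtIco, show n - t = n - (t + 1) + 1 by omega, List.range'_succ, List.map_cons,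
    List.prod_cons, if_pos h]

lemma wtIco_insert_of_lt {x : ℕ} (hx : x < t) : wtIco (insert x S) t n = wtIco S t n := by
  rw [wtIco, wtIco]
  congr 1
  refine List.map_congr_left fun j hj => ?_
  have : j ≠ x := by rw [List.mem_range'_1] at hj; omega
  simp [this]

end Weights

lemma strictMono_of_covBy_eq_add_one {P : Type*} [PartialOrder P] [Finite P] {rk : P → ℕ}
    (h : ∀ u v : P, u ⋖ v → rk v = rk u + 1) : StrictMono rk := by
  have := Fintype.ofFinite P
  let := Fintype.toLocallyFiniteOrder (α := P)
  exact (strictMono_iff_forall_covBy rk).2 fun u v huv => by rw [h u v huv]; omega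

section ChainRanks

variable {P : Type*} {rk : P → ℕ}

def chainRanks (rk : P → ℕ) {k : ℕ} (c : Fin (k + 1) → P) : Finset ℕ :=
  univ.image fun i : Fin k => rk (c i.castSucc)

lemma chainRanks_cons {k : ℕ} (w : P) (c : Fin (k + 1) → P) :
    chainRanks rk (Fin.cons w c : Fin (k + 1 + 1) → P) = insert (rk w) (chainRanks rk c) := by
  ext s
  simp [chainRanks, Fin.exists_fin_succ, eq_comm]

end ChainRanks

section Chains

variable {P : Type*} [Fintype P] [PartialOrder P]

lemma sum_filter_le_eq_add_sum_filter_lt {M : Type*} [AddCommMonoid M] (u : P) (f : P → M) :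
    ∑ v ∈ univ.filter (u ≤ ·), f v = f u + ∑ v ∈ univ.filter (u < ·), f v := by
  rw [← sum_insert (by simp)]
  congr 1
  ext v
  simp [le_iff_eq_or_lt, eq_comm]

variable [BoundedOrder P] {rk : P → ℕ}

lemma sum_filter_lt_eq_add_sum_filter_lt_top {M : Type*} [AddCommMonoid M] {u : P} (hu : u < ⊤)
    (f : P → M) :
    ∑ v ∈ univ.filter (u < ·), f v = f ⊤ + ∑ v ∈ univ.filter (fun v => u < v ∧ v < ⊤), f v := by
  rw [← sum_insert (by simp)]
  congr 1
  ext v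
  rcases eq_or_ne v ⊤ with rfl | hv
  · simp [hu]
  · simp [hv, lt_top_iff_ne_top]

def chainsFrom (k : ℕ) (w : P) : Finset (Fin (k + 1) → P) :=
  univ.filter fun c => StrictMono c ∧ c (Fin.last k) = ⊤ ∧ c 0 = w

lemma sum_filter_chains_eq_sum_chainsFrom {M : Type*} [AddCommMonoid M] (k : ℕ) (p : P → Prop)
    (f : (Fin (k + 1) → P) → M) :
    ∑ c ∈ univ.filter (fun c : Fin (k + 1) → P => StrictMono c ∧ c (Fin.last k) = ⊤ ∧ p (c 0)),
        f c =
      ∑ v ∈ univ.filter p, ∑ c ∈ chainsFrom k v, f c := by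
  rw [← sum_fiberwise_of_maps_to (g := fun c => c 0) (t := univ.filter p)]
  · refine sum_congr rfl fun v hv => sum_congr ?_ fun _ _ => rfl
    ext c
    simp only [chainsFrom, mem_filter, mem_univ, true_and] at hv ⊢
    exact ⟨fun ⟨⟨h, h', _⟩, h0⟩ => ⟨h, h', h0⟩, fun ⟨h, h', h0⟩ => ⟨⟨h, h', h0 ▸ hv⟩, h0⟩⟩
  · intro c hc
    simp only [mem_filter, mem_univ, true_and] at hc ⊢
    exact hc.2.2

lemma chainsFrom_succ (k : ℕ) (w : P) :
    chainsFrom (k + 1) w =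
      (univ.filter fun c : Fin (k + 1) → P => StrictMono c ∧ c (Fin.last k) = ⊤ ∧ w < c 0).image
        (Fin.cons w) := by
  ext c
  simp only [chainsFrom, mem_image, mem_filter, mem_univ, true_and]
  constructor
  · rintro ⟨hc, hlast, rfl⟩
    refine ⟨Fin.tail c, ⟨hc.comp (Fin.strictMono_succ), ?_, hc (Fin.succ_pos 0)⟩,
      Fin.cons_self_tail c⟩
    rw [Fin.tail, Fin.succ_last, hlast]
  · rintro ⟨c, ⟨hc, hlast, hw⟩, rfl⟩
    refine ⟨Fin.strictMono_cons.2 ⟨fun j => hw.trans_le (hc.monotone (Fin.zero_le j)), hc⟩, ?_,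
      Fin.cons_zero _ _⟩
    rw [← Fin.succ_last, Fin.cons_succ, hlast]

lemma sum_chainsFrom_succ {M : Type*} [AddCommMonoid M] (k : ℕ) (w : P)
    (f : (Fin (k + 1 + 1) → P) → M) :
    ∑ c ∈ chainsFrom (k + 1) w, f c =
      ∑ v ∈ univ.filter (w < ·), ∑ c ∈ chainsFrom k v, f (Fin.cons w c) := by
  rw [chainsFrom_succ, sum_image (Fin.cons_right_injective (α := fun _ => P) w).injOn,
    sum_filter_chains_eq_sum_chainsFrom k (w < ·)]

lemma le_of_mem_chainRanks (hrk : Monotone rk) {k : ℕ} {w : P} {c : Fin (k + 1) → P}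
    (hc : c ∈ chainsFrom k w) {s : ℕ} (hs : s ∈ chainRanks rk c) : rk w ≤ s := by
  simp only [chainsFrom, chainRanks, mem_filter, mem_image, mem_univ, true_and] at hc hs
  obtain ⟨i, rfl⟩ := hs
  exact hc.2.2 ▸ hrk (hc.1.monotone (Fin.zero_le _))

lemma chainsFrom_zero (w : P) : chainsFrom 0 w = if w = ⊤ then {fun _ => ⊤} else ∅ := by
  ext c
  have hsm : StrictMono c := Subsingleton.strictMono (α := Fin 1) c
  have hc : c = fun _ => c 0 := funext fun i => congrArg c (Fin.fin_one_eq_zero i)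
  simp only [chainsFrom, mem_filter, mem_univ, true_and, Fin.last_zero, hsm]
  split_ifs with hw
  · subst hw
    simp only [mem_singleton, and_self]
    exact ⟨fun h => hc.trans (by rw [h]), fun h => h ▸ rfl⟩
  · simp only [notMem_empty, iff_false]
    rintro ⟨h, h'⟩
    exact hw (h' ▸ h)

lemma lt_top_of_mem_chainsFrom {k : ℕ} (hk : 0 < k) {w : P} {c : Fin (k + 1) → P}
    (hc : c ∈ chainsFrom k w) : w < ⊤ := by
  simp only [chainsFrom, mem_filter, mem_univ, true_and] at hc
  obtain ⟨hsm, hlast, rfl⟩ := hc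
  exact hlast ▸ hsm (by rw [Fin.lt_def]; simpa using hk)

lemma chainsFrom_card (w : P) : chainsFrom (Fintype.card P) w = ∅ :=
  eq_empty_of_forall_notMem fun c hc => by
    have := Fintype.card_le_of_injective c (mem_filter.1 hc).2.1.injective
    simp at this

variable (rk) in
def chainSum (w : P) : NCPoly :=
  ∑ k ∈ range (Fintype.card P), ∑ c ∈ chainsFrom k w, wtIco (chainRanks rk c) (rk w) (rk ⊤)

variable (rk) in
def chainSumAbove (w : P) : NCPoly :=
  ∑ v ∈ univ.filter (w < ·), (Aa - Bb) ^ (rk v - rk w - 1) * chainSum rk v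

lemma wtS_chain (hrk : Monotone rk) {k : ℕ} {u v : P} (huv : u ≤ v) {c : Fin (k + 1) → P}
    (hc : c ∈ chainsFrom k v) :
    wtS (rk ⊤ - rk u) (univ.image fun i : Fin k => rk (c i.castSucc) - rk u) =
      (Aa - Bb) ^ (rk v - rk u) * wtIco (chainRanks rk c) (rk v) (rk ⊤) := by
  have hR : ∀ s ∈ chainRanks rk c, rk v ≤ s := fun s hs => le_of_mem_chainRanks hrk hc hs
  have himage : (univ.image fun i : Fin k => rk (c i.castSucc) - rk u) =
      (chainRanks rk c).image (· - rk u) := by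
    rw [chainRanks, image_image]
    rfl
  rw [himage, wtS_image_sub fun s hs => (hrk huv).trans (hR s hs),
    wtIco_trans (hrk huv) (hrk le_top), wtIco_eq_pow fun s hs => Or.inr (hR s hs)]

lemma psiFrom_eq_sum_chainSum (hrk : Monotone rk) (u : P) :
    psiFrom rk u = ∑ v ∈ univ.filter (u ≤ ·), (Aa - Bb) ^ (rk v - rk u) * chainSum rk v := by
  simp only [psiFrom, chainSum, mul_sum]
  rw [sum_comm]
  refine sum_congr rfl fun k _ => ?_
  rw [sum_filter_chains_eq_sum_chainsFrom k (u ≤ ·)]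
  refine sum_congr rfl fun v hv => sum_congr rfl fun c hc => wtS_chain hrk ?_ hc
  simpa using hv

lemma chainSum_top : chainSum rk (⊤ : P) = 1 := by
  rw [chainSum, sum_eq_single_of_mem 0 (mem_range.2 Fintype.card_pos)]
  · simp [chainsFrom_zero, wtIco_self]
  · intro k _ hk
    exact sum_eq_zero fun c hc =>
      absurd (lt_top_of_mem_chainsFrom (Nat.pos_of_ne_zero hk) hc) (lt_irrefl _)

lemma wtIco_chainRanks_cons (hrk : StrictMono rk) {k : ℕ} {w v : P} (hwv : w < v)
    {c : Fin (k + 1) → P} (hc : c ∈ chainsFrom k v) :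
    wtIco (chainRanks rk (Fin.cons w c : Fin (k + 1 + 1) → P)) (rk w) (rk ⊤) =
      Bb * ((Aa - Bb) ^ (rk v - rk w - 1) * wtIco (chainRanks rk c) (rk v) (rk ⊤)) := by
  have hR : ∀ s ∈ chainRanks rk c, rk v ≤ s := fun s hs => le_of_mem_chainRanks hrk.monotone hc hs
  have hvtop : rk v ≤ rk ⊤ := hrk.monotone le_top
  rw [chainRanks_cons, wtIco_of_mem (mem_insert_self _ _) ((hrk hwv).trans_le hvtop),
    wtIco_insert_of_lt (Nat.lt_succ_self _), wtIco_trans (hrk hwv) hvtop,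
    wtIco_eq_pow fun s hs => Or.inr (hR s hs), Nat.sub_sub]

lemma chainSum_of_lt_top (hrk : StrictMono rk) {w : P} (hw : w < ⊤) :
    chainSum rk w = Bb * chainSumAbove rk w := by
  set f : ℕ → NCPoly := fun k => ∑ c ∈ chainsFrom k w, wtIco (chainRanks rk c) (rk w) (rk ⊤)
  have hf : ∀ k, f (k + 1) = Bb * ∑ v ∈ univ.filter (w < ·), (Aa - Bb) ^ (rk v - rk w - 1) *
      ∑ c ∈ chainsFrom k v, wtIco (chainRanks rk c) (rk v) (rk ⊤) := by
    intro k
    simp only [f, sum_chainsFrom_succ, mul_sum]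
    exact sum_congr rfl fun v hv => sum_congr rfl fun c hc =>
      wtIco_chainRanks_cons hrk (by simpa using hv) hc
  have hf0 : f 0 = 0 := by simp only [f, chainsFrom_zero, if_neg hw.ne, sum_empty]
  have hfcard : f (Fintype.card P) = 0 := by simp only [f, chainsFrom_card, sum_empty]
  calc chainSum rk w = ∑ k ∈ range (Fintype.card P + 1), f k := by
        rw [sum_range_succ, hfcard, add_zero]
        rfl
    _ = ∑ k ∈ range (Fintype.card P), f (k + 1) := by rw [sum_range_succ', hf0, add_zero]
    _ = Bb * chainSumAbove rk w := by
        simp only [hf, chainSumAbove, chainSum, mul_sum]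
        exact sum_comm

lemma psiFrom_eq_Aa_mul_chainSumAbove (hrk : StrictMono rk) {u : P} (hu : u < ⊤) :
    psiFrom rk u = Aa * chainSumAbove rk u := by
  have hshift : ∑ v ∈ univ.filter (u < ·), (Aa - Bb) ^ (rk v - rk u) * chainSum rk v =
      (Aa - Bb) * chainSumAbove rk u := by
    rw [chainSumAbove, mul_sum]
    refine sum_congr rfl fun v hv => ?_
    have : rk u < rk v := hrk (by simpa using hv)
    rw [← mul_assoc, ← pow_succ', Nat.sub_one_add_one (by omega)]
  rw [psiFrom_eq_sum_chainSum hrk.monotone, sum_filter_le_eq_add_sum_filter_lt, Nat.sub_self,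
    pow_zero, one_mul, chainSum_of_lt_top hrk hu, hshift, ← add_mul, add_sub_cancel]

lemma psiTildeFrom_eq_chainSumAbove (hrk : StrictMono rk) {w : P} (hw : w < ⊤) :
    psiTildeFrom rk w = chainSumAbove rk w := by
  rw [psiTildeFrom, psiFrom_eq_Aa_mul_chainSumAbove hrk hw, iota_Aa_mul]

lemma chainSumAbove_eq_add_sum_psiTildeFrom (hrk : StrictMono rk) {u : P} (hu : u < ⊤) :
    chainSumAbove rk u = (Aa - Bb) ^ (rk ⊤ - rk u - 1) +
      ∑ w ∈ univ.filter (fun w => u < w ∧ w < ⊤),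
        (Aa - Bb) ^ (rk w - rk u - 1) * (Bb * psiTildeFrom rk w) := by
  rw [chainSumAbove, sum_filter_lt_eq_add_sum_filter_lt_top hu, chainSum_top, mul_one]
  refine congrArg _ (sum_congr rfl fun w hw => ?_)
  have hw : w < ⊤ := (mem_filter.1 hw).2.2
  rw [chainSum_of_lt_top hrk hw, psiTildeFrom_eq_chainSumAbove hrk hw]

end Chains

end

open Classical in
/-- Recursion for the `ab`-index of a finite, graded, bounded poset of rank
`n ≥ 1`. -/
theorem psi_recursion
    {P : Type*} [Fintype P] [PartialOrder P] [BoundedOrder P]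
    (rk : P → ℕ) (n : ℕ) (hn : 1 ≤ n)
    (hrk_bot : rk (⊥ : P) = 0) (hrk_top : rk (⊤ : P) = n)
    (hrk_cov : ∀ u v : P, u ⋖ v → rk v = rk u + 1) :
    psiFrom rk (⊥ : P) =
      Aa * (Aa - Bb) ^ (n - 1) +
        ∑ w ∈ Finset.univ.filter fun w : P => ⊥ < w ∧ w < ⊤,
          Aa * (Aa - Bb) ^ (rk w - 1) * Bb * psiTildeFrom rk w := by
  have hrk : StrictMono rk := strictMono_of_covBy_eq_add_one hrk_cov
  have hbot : (⊥ : P) < ⊤ := bot_le.lt_of_ne fun h => by rw [h] at hrk_bot; omega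
  rw [psiFrom_eq_Aa_mul_chainSumAbove hrk hbot, chainSumAbove_eq_add_sum_psiTildeFrom hrk hbot,
    hrk_bot, hrk_top, mul_add, Finset.mul_sum]
  simp only [Nat.sub_zero, mul_assoc]
end

section
/- For every k ≥ 0, ω(a·(a-b)^k) = (a - (-y)^{k+1}·b)·(a-b)^k in ℤ[y]⟨a,b⟩. -/
open Polynomial

/-!
By linearity, `ω(b g) = (b + y a) ω(g)`, `ω(a a g) = (a + y b) ω(a g)` and
`ω(a b g) = (1 + y)(ab + y ba) ω(g)`. With `u = a - b` and `u^{k+1} = a u^k - b u^k`, these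
carry the claim for `k`, together with `(1 + y) ω(u^k) = (1 - (-y)^{k+1}) u^k`, to `k + 1`.
Because of the factor `1 + y`, only this multiple of `ω(u^k)` ever occurs, so the geometric
sum `ω(u^k) = (∑_{i ≤ k} (-y)^i) u^k` is never needed.
-/

noncomputable section

open MonoidAlgebra

def omegaLinear : NCPoly →ₗ[NCR] NCPoly :=
  Finsupp.linearCombination NCR (fun w : FreeMonoid Bool => omegaWord w.toList) ∘ₗ
    (coeffLinearEquiv NCR).toLinearMap

lemma omegaLinear_apply (f : NCPoly) : omegaLinear f = omega f :=
  Finsupp.linearCombination_apply _ _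

lemma omega_add (f g : NCPoly) : omega (f + g) = omega f + omega g := by
  simp only [← omegaLinear_apply, map_add]

lemma omega_sub (f g : NCPoly) : omega (f - g) = omega f - omega g := by
  simp only [← omegaLinear_apply, map_sub]

lemma omega_smul (c : NCR) (f : NCPoly) : omega (c • f) = c • omega f := by
  simp only [← omegaLinear_apply, map_smul]

lemma omega_of (w : FreeMonoid Bool) : omega (of NCR _ w) = omegaWord w.toList := by
  rw [← omegaLinear_apply]
  simp [omegaLinear]

lemma omega_of_mul_eq_mul_omega_of_mul {m m' : FreeMonoid Bool} {F : NCPoly}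
    (hF : ∀ w, omegaWord (m * w).toList = F * omegaWord (m' * w).toList) (g : NCPoly) :
    omega (of NCR _ m * g) = F * omega (of NCR _ m' * g) := by
  induction g using MonoidAlgebra.induction_linear with
  | zero => simp only [mul_zero, ← omegaLinear_apply, map_zero]
  | add f g hf hg => simp only [mul_add, omega_add, hf, hg]
  | single w c =>
    rw [← smul_of, mul_smul_comm, mul_smul_comm, omega_smul, omega_smul, ← map_mul, ← map_mul,
      omega_of, omega_of, hF, mul_smul_comm]

lemma omega_Bb_mul (g : NCPoly) : omega (Bb * g) = (Bb + (X : NCR) • Aa) * omega g := by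
  have h := omega_of_mul_eq_mul_omega_of_mul (m := .of true) (m' := 1) (fun _ => rfl) g
  rwa [map_one, one_mul] at h

lemma omega_Aa_mul_Aa_mul (g : NCPoly) :
    omega (Aa * (Aa * g)) = (Aa + (X : NCR) • Bb) * omega (Aa * g) := by
  have h := omega_of_mul_eq_mul_omega_of_mul (m := .of false * .of false) (m' := .of false)
    (fun _ => rfl) g
  rwa [map_mul, mul_assoc] at h

lemma omega_Aa_mul_Bb_mul (g : NCPoly) :
    omega (Aa * (Bb * g)) = (Aa * Bb + (X : NCR) • (Bb * Aa)) * ((1 + X : NCR) • omega g) := by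
  have h := omega_of_mul_eq_mul_omega_of_mul (m := .of false * .of true) (m' := 1) (fun _ => rfl) g
  rw [map_mul, map_one, one_mul, mul_assoc] at h
  have hfactor : (1 + X : NCR) • (Aa * Bb) + (X + X ^ 2 : NCR) • (Bb * Aa) =
      (1 + X : NCR) • (Aa * Bb + (X : NCR) • (Bb * Aa)) := by module
  rw [show omega (Aa * (Bb * g)) = _ from h, hfactor, smul_mul_assoc, mul_smul_comm]

theorem omega_Aa_mul_pow_sub_and_smul_omega_pow_sub (k : ℕ) :
    omega (Aa * (Aa - Bb) ^ k) = (Aa - ((-X : NCR) ^ (k + 1)) • Bb) * (Aa - Bb) ^ k ∧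
      (1 + X : NCR) • omega ((Aa - Bb) ^ k) = (1 - (-X : NCR) ^ (k + 1)) • (Aa - Bb) ^ k := by
  induction k with
  | zero =>
    have hA : omega Aa = Aa + (X : NCR) • Bb := (omega_of _).trans (mul_one _)
    have h1 : omega 1 = 1 := by
      have h := omega_of 1
      rwa [map_one] at h
    constructor
    · rw [pow_zero, mul_one, mul_one, hA]
      module
    · rw [pow_zero, h1]
      congr 1
      ring
  | succ k ih =>
    obtain ⟨hP, hQ⟩ := ih
    set u := Aa - Bb
    set p := (-X : NCR) ^ (k + 1)
    constructor
    · calc omega (Aa * u ^ (k + 1))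
          = omega (Aa * (Aa * u ^ k)) - omega (Aa * (Bb * u ^ k)) := by
            rw [pow_succ', sub_mul, mul_sub, omega_sub]
        _ = (Aa + (X : NCR) • Bb) * ((Aa - p • Bb) * u ^ k) -
              (Aa * Bb + (X : NCR) • (Bb * Aa)) * ((1 - p) • u ^ k) := by
            rw [omega_Aa_mul_Aa_mul, omega_Aa_mul_Bb_mul, hP, hQ]
        _ = (Aa - ((-X : NCR) ^ (k + 1 + 1)) • Bb) * u ^ (k + 1) := by
            simp only [u, p, pow_succ' (Aa - Bb), add_mul, mul_sub, sub_mul, smul_mul_assoc,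
              mul_smul_comm, mul_assoc]
            module
    · calc (1 + X : NCR) • omega (u ^ (k + 1))
          = (1 + X : NCR) • omega (Aa * u ^ k) -
              (Bb + (X : NCR) • Aa) * ((1 + X : NCR) • omega (u ^ k)) := by
            rw [pow_succ', sub_mul, omega_sub, omega_Bb_mul, smul_sub, mul_smul_comm]
        _ = (1 + X : NCR) • ((Aa - p • Bb) * u ^ k) -
              (Bb + (X : NCR) • Aa) * ((1 - p) • u ^ k) := by
            rw [hP, hQ]
        _ = (1 - (-X : NCR) ^ (k + 1 + 1)) • u ^ (k + 1) := by
            simp only [u, p, pow_succ' (Aa - Bb), add_mul, sub_mul, smul_mul_assoc, mul_smul_comm,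
              smul_sub, smul_add]
            module

/-- `ω(a·(a-b)^k) = (a - (-y)^{k+1}·b)·(a-b)^k` in `ℤ[y]⟨a,b⟩`. -/
theorem omega_a_mul_pow_sub (k : ℕ) :
    omega (Aa * (Aa - Bb) ^ k) =
      (Aa - ((-X : Polynomial ℤ) ^ (k + 1)) • Bb) * (Aa - Bb) ^ k :=
  (omega_Aa_mul_pow_sub_and_smul_omega_pow_sub k).1
end
end
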